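/- Let f be an L_p-nested function on ℝⁿ with tree whose inner nodes form the index set 𝓘, node I having ℓ_I children and n_{I,k} leaves under its k-th child. The Lebesgue volume of {x ∈ ℝⁿ : f(x) ≤ R} equals (R^n 2^n / n) · ∏_{I∈𝓘} [ (∏_{k=1}^{ℓ_I} Γ(n_{I,k}/p_I)) / (p_I^{ℓ_I−1} Γ(n_I/p_I)) ], where n_I = ∑_k n_{I,k}. -/

import Mathlib

open Real MeasureTheory

inductive LpTree : Type
  | leaf : LpTree
  | node : ℝ → List LpTree → LpTree

namespace LpTree

mutual
/-- Number of leaves (= dimension) of an `L_p`-nested tree. -/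
def numLeaves : LpTree → ℕ
  | leaf => 1
  | node _ cs => numLeavesList cs

def numLeavesList : List LpTree → ℕ
  | [] => 0
  | c :: cs => numLeaves c + numLeavesList cs
end

mutual
/-- Evaluation of an `L_p`-nested function on coordinates `x 0, x 1, ...`. -/
noncomputable def eval : LpTree → (ℕ → ℝ) → ℝ
  | .leaf, x => |x 0|
  | .node p cs, x => (evalSum p cs x) ^ (1 / p)

noncomputable def evalSum : ℝ → List LpTree → (ℕ → ℝ) → ℝ
  | _, [], _ => 0
  | p, c :: cs, x => (eval c x) ^ p + evalSum p cs (fun i => x (i + c.numLeaves))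
end

/-- Well-formedness: every inner node has a positive exponent and at least one child. -/
inductive WF : LpTree → Prop
  | leaf : WF .leaf
  | node (p : ℝ) (cs : List LpTree) (hp : 0 < p) (hcs : cs ≠ [])
      (h : ∀ c ∈ cs, WF c) : WF (.node p cs)

/-- The `L_p`-nested function as a function on `ℝⁿ`, `n = t.numLeaves`. -/
noncomputable def evalFin (t : LpTree) (x : Fin t.numLeaves → ℝ) : ℝ :=
  t.eval (fun i => if h : i < t.numLeaves then x ⟨i, h⟩ else 0)

end LpTree

namespace LpTree

mutual
/-- The product over all inner nodes `I` of
`(∏_k Γ(n_{I,k}/p_I)) / (p_I^{ℓ_I−1} Γ(n_I/p_I))`. -/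
noncomputable def gammaFactor : LpTree → ℝ
  | .leaf => 1
  | .node p cs =>
      gammaNumerator p cs / (p ^ (cs.length - 1) * Real.Gamma (numLeavesList cs / p)) *
        gammaFactorList cs

/-- `∏_k Γ(n_{I,k}/p)` over the children of a node. -/
noncomputable def gammaNumerator : ℝ → List LpTree → ℝ
  | _, [] => 1
  | p, c :: cs => Real.Gamma (c.numLeaves / p) * gammaNumerator p cs

/-- Product of `gammaFactor` over a list of subtrees. -/
noncomputable def gammaFactorList : List LpTree → ℝ
  | [] => 1
  | c :: cs => gammaFactor c * gammaFactorList cs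
end

end LpTree

section AuxVol

open Real MeasureTheory Set ENNReal Pointwise

namespace LpVolAux

lemma continuous_rpow_const {q : ℝ} (hq : 0 ≤ q) : Continuous fun x : ℝ => x ^ q :=
  continuous_iff_continuousAt.mpr fun x => Real.continuousAt_rpow_const x q (Or.inr hq)

lemma measurable_rpow_const (q : ℝ) : Measurable fun x : ℝ => x ^ q :=
  measurable_of_continuousOn_compl_singleton 0 fun x hx =>
    (Real.continuousAt_rpow_const x q (Or.inl hx)).continuousWithinAt

lemma ennreal_cancel {a b g : ℝ≥0∞} (hg0 : g ≠ 0) (hgtop : g ≠ ∞) (h : a * g = b * g) :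
    a = b := by
  have := congrArg (· * g⁻¹) h
  simpa [mul_assoc, ENNReal.mul_inv_cancel hg0 hgtop] using this

lemma exp_neg_image : (fun x : ℝ => Real.exp (-x)) '' Set.Ioi 0 = Set.Ioo 0 1 := by
  ext t
  constructor
  · rintro ⟨x, hx, rfl⟩
    exact ⟨Real.exp_pos _, Real.exp_lt_one_iff.mpr (by simpa using (Set.mem_Ioi.mp hx))⟩
  · rintro ⟨h0, h1⟩
    exact ⟨-Real.log t, Set.mem_Ioi.mpr (by simpa using Real.log_neg h0 h1),
      by simp [Real.exp_log h0]⟩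

lemma exp_neg_deriv (x : ℝ) (hx : x ∈ Set.Ioi (0:ℝ)) :
    HasDerivWithinAt (fun x : ℝ => Real.exp (-x)) (-Real.exp (-x)) (Set.Ioi 0) x := by
  have hd := (hasDerivAt_neg x).exp
  rw [mul_neg_one] at hd
  exact hd.hasDerivWithinAt

lemma exp_neg_injOn : Set.InjOn (fun x : ℝ => Real.exp (-x)) (Set.Ioi 0) := by
  intro a _ b _ h
  simpa using Real.exp_injective h

lemma lintegral_neg_log_rpow {a : ℝ} (ha : 0 ≤ a) :
    ∫⁻ t in Set.Ioo (0:ℝ) 1, ENNReal.ofReal ((- Real.log t) ^ a) =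
      ENNReal.ofReal (Real.Gamma (a + 1)) := by
  have hint0 : IntegrableOn (fun x : ℝ => Real.exp (-x) * x ^ (a + 1 - 1)) (Set.Ioi 0) :=
    Real.GammaIntegral_convergent (by linarith)
  have hcong : ∀ x ∈ Set.Ioi (0:ℝ),
      |(-Real.exp (-x))| • (fun t : ℝ => (-Real.log t) ^ a) (Real.exp (-x))
        = Real.exp (-x) * x ^ (a + 1 - 1) := by
    intro x _
    simp [abs_of_nonneg (Real.exp_pos (-x)).le, Real.log_exp, smul_eq_mul]
  have key : ∫ t in Set.Ioo (0:ℝ) 1, (-Real.log t) ^ a = Real.Gamma (a + 1) := by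
    rw [← exp_neg_image,
      integral_image_eq_integral_abs_deriv_smul measurableSet_Ioi exp_neg_deriv exp_neg_injOn]
    rw [Real.Gamma_eq_integral (by linarith : (0:ℝ) < a + 1)]
    exact setIntegral_congr_fun measurableSet_Ioi hcong
  have hint : IntegrableOn (fun t : ℝ => (-Real.log t) ^ a) (Set.Ioo (0:ℝ) 1) := by
    rw [← exp_neg_image,
      integrableOn_image_iff_integrableOn_abs_deriv_smul measurableSet_Ioi exp_neg_deriv
        exp_neg_injOn]
    exact (integrableOn_congr_fun hcong measurableSet_Ioi).mpr hint0
  rw [← ofReal_integral_eq_lintegral_ofReal hint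
    (((ae_restrict_mem measurableSet_Ioo).mono fun t ht =>
      Real.rpow_nonneg (by simpa using Real.log_nonpos ht.1.le ht.2.le) a)), key]

variable {n : ℕ}

lemma volume_scale {f : (Fin n → ℝ) → ℝ}
    (hhom : ∀ c : ℝ, 0 ≤ c → ∀ x, f (c • x) = c * f x) {r : ℝ} (hr : 0 < r) :
    volume {x | f x ≤ r} = ENNReal.ofReal (r ^ n) * volume {x | f x ≤ 1} := by
  have hs : {x : Fin n → ℝ | f x ≤ r} = r • {x | f x ≤ 1} := by
    ext x
    rw [Set.mem_smul_set_iff_inv_smul_mem₀ hr.ne']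
    simp only [Set.mem_setOf_eq, hhom r⁻¹ (inv_nonneg.mpr hr.le)]
    rw [inv_mul_le_iff₀ hr, mul_one]
  rw [hs, Measure.addHaar_smul_of_nonneg volume hr.le, Module.finrank_fin_fun]

lemma core (hn : 0 < n) {f : (Fin n → ℝ) → ℝ} (hmes : Measurable f)
    (h0 : ∀ x, 0 ≤ f x) (hhom : ∀ c : ℝ, 0 ≤ c → ∀ x, f (c • x) = c * f x)
    {p : ℝ} (hp : 0 < p) :
    ∫⁻ x, ENNReal.ofReal (Real.exp (-(f x) ^ p)) =
      volume {x | f x ≤ 1} * ENNReal.ofReal (Real.Gamma (n / p + 1)) := by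
  have hFm : Measurable fun x => Real.exp (-(f x) ^ p) :=
    Real.measurable_exp.comp (((continuous_rpow_const hp.le).measurable.comp hmes).neg)
  rw [lintegral_eq_lintegral_meas_le volume
    (Filter.Eventually.of_forall fun x => (Real.exp_pos _).le) hFm.aemeasurable]
  have h1 : ∀ᵐ t : ℝ, t ≠ 1 := by
    rw [ae_iff]
    have : {a : ℝ | ¬a ≠ 1} = {1} := by ext t; simp
    rw [this]
    exact measure_singleton 1
  have heq : ∀ᵐ t ∂(volume.restrict (Set.Ioi (0:ℝ))),
      volume {a : Fin n → ℝ | t ≤ Real.exp (-(f a) ^ p)} =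
        Set.indicator (Set.Ioo 0 1)
          (fun t => ENNReal.ofReal ((-Real.log t) ^ ((n:ℝ) / p)) * volume {x | f x ≤ 1}) t := by
    filter_upwards [ae_restrict_mem measurableSet_Ioi, ae_restrict_of_ae h1] with t ht ht1
    rcases lt_or_gt_of_ne ht1 with htlt | htgt
    · have htmem : t ∈ Set.Ioo (0:ℝ) 1 := ⟨ht, htlt⟩
      have hlog : 0 < -Real.log t := by simpa using Real.log_neg ht htlt
      have hcanc : ((-Real.log t) ^ (1/p)) ^ p = -Real.log t := by
        rw [← Real.rpow_mul hlog.le, one_div_mul_cancel hp.ne', Real.rpow_one]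
      have hset : {a : Fin n → ℝ | t ≤ Real.exp (-(f a) ^ p)}
          = {x | f x ≤ (-Real.log t) ^ (1 / p)} := by
        ext a
        simp only [Set.mem_setOf_eq]
        rw [← Real.log_le_iff_le_exp ht, le_neg,
          ← Real.rpow_le_rpow_iff (h0 a) (Real.rpow_nonneg hlog.le _) hp, hcanc]
      rw [hset, volume_scale hhom (Real.rpow_pos_of_pos hlog _), Set.indicator_of_mem htmem]
      congr 2
      rw [← Real.rpow_natCast ((-Real.log t) ^ (1/p)) n, ← Real.rpow_mul hlog.le]
      congr 1
      field_simp
    · have hset : {a : Fin n → ℝ | t ≤ Real.exp (-(f a) ^ p)} = ∅ := by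
        ext a
        simp only [Set.mem_setOf_eq, Set.mem_empty_iff_false, iff_false, not_le]
        calc Real.exp (-(f a) ^ p) ≤ 1 := by
              rw [Real.exp_le_one_iff, neg_nonpos]
              exact Real.rpow_nonneg (h0 a) p
          _ < t := htgt
      rw [hset, Set.indicator_of_notMem (fun hm => lt_asymm htgt hm.2), measure_empty]
  rw [lintegral_congr_ae heq, lintegral_indicator measurableSet_Ioo,
    Measure.restrict_restrict measurableSet_Ioo]
  have hinter : Set.Ioo (0:ℝ) 1 ∩ Set.Ioi 0 = Set.Ioo 0 1 := by
    ext t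
    simp only [Set.mem_inter_iff, Set.mem_Ioo, Set.mem_Ioi, and_iff_left_iff_imp]
    exact fun h => h.1
  have hm1 : Measurable fun t : ℝ => (-Real.log t) ^ ((n:ℝ)/p) := by
    exact (continuous_rpow_const (by positivity)).measurable.comp Real.measurable_log.neg
  rw [hinter, lintegral_mul_const _ hm1.ennreal_ofReal,
    lintegral_neg_log_rpow (by positivity), mul_comm]

/-- Combine two vectors into one of length `A = m + n`. -/
def combine {m n A : ℕ} (hA : m + n = A) (y : Fin m → ℝ) (z : Fin n → ℝ) : Fin A → ℝ :=
  fun j => if h : (j : ℕ) < m then y ⟨j, h⟩ else z ⟨(j : ℕ) - m, by omega⟩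

lemma lintegral_split {m n A : ℕ} (hA : m + n = A)
    (F : (Fin m → ℝ) → ℝ≥0∞) (G : (Fin n → ℝ) → ℝ≥0∞)
    (hF : AEMeasurable F (volume : Measure (Fin m → ℝ)))
    (hG : AEMeasurable G (volume : Measure (Fin n → ℝ)))
    (H : (Fin A → ℝ) → ℝ≥0∞)
    (hH : ∀ (y : Fin m → ℝ) (z : Fin n → ℝ),
      H (combine hA y z) = F y * G z) :
    ∫⁻ x, H x = (∫⁻ y, F y) * (∫⁻ z, G z) := by
  let e : Fin m ⊕ Fin n ≃ Fin A := finSumFinEquiv.trans (finCongr hA)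
  let φ : ((Fin m → ℝ) × (Fin n → ℝ)) ≃ᵐ (Fin A → ℝ) :=
    (MeasurableEquiv.sumPiEquivProdPi (fun _ : Fin m ⊕ Fin n => ℝ)).symm.trans
      (MeasurableEquiv.piCongrLeft (fun _ => ℝ) e)
  have hφ : MeasurePreserving φ volume volume := by
    have := (volume_measurePreserving_piCongrLeft (fun _ : Fin A => ℝ) e).comp
      (volume_measurePreserving_sumPiEquivProdPi_symm (fun _ : Fin m ⊕ Fin n => ℝ))
    exact this
  rw [← hφ.lintegral_comp_emb φ.measurableEmbedding]
  have hl : ∀ (y : Fin m → ℝ) (z : Fin n → ℝ) (k : Fin m ⊕ Fin n),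
      φ (y, z) (e k) = Sum.elim y z k := by
    intro y z k
    show (MeasurableEquiv.piCongrLeft (fun _ => ℝ) e)
      ((MeasurableEquiv.sumPiEquivProdPi (fun _ : Fin m ⊕ Fin n => ℝ)).symm (y, z)) (e k)
        = Sum.elim y z k
    rw [MeasurableEquiv.piCongrLeft_apply_apply,
      MeasurableEquiv.coe_sumPiEquivProdPi_symm]
    cases k <;> rfl
  have hval : ∀ (y : Fin m → ℝ) (z : Fin n → ℝ) (k : Fin m ⊕ Fin n) (j : Fin A),
      e k = j → φ (y, z) j = Sum.elim y z k := by
    rintro y z k j rfl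
    exact hl y z k
  have hpt : ∀ yz : (Fin m → ℝ) × (Fin n → ℝ), H (φ yz) = F yz.1 * G yz.2 := by
    rintro ⟨y, z⟩
    rw [← hH y z]
    congr 1
    funext j
    rw [combine]
    by_cases h : (j : ℕ) < m
    · have hj : e (Sum.inl ⟨(j : ℕ), h⟩) = j := by
        apply Fin.ext
        simp [e, finCongr_apply]
      rw [hval y z (Sum.inl ⟨(j : ℕ), h⟩) j hj, Sum.elim_inl, dif_pos h]
    · have hj : e (Sum.inr ⟨(j : ℕ) - m, by omega⟩) = j := by
        apply Fin.ext
        simp [e, finCongr_apply]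
        omega
      rw [hval y z (Sum.inr ⟨(j : ℕ) - m, by omega⟩) j hj, Sum.elim_inr, dif_neg h]
  calc ∫⁻ yz : (Fin m → ℝ) × (Fin n → ℝ), H (φ yz)
      = ∫⁻ yz : (Fin m → ℝ) × (Fin n → ℝ), F yz.1 * G yz.2 :=
        lintegral_congr hpt
    _ = (∫⁻ y, F y) * (∫⁻ z, G z) := by
        rw [MeasureTheory.Measure.volume_eq_prod, lintegral_prod_mul hF hG]

end LpVolAux

end AuxVol

namespace LpTree

open LpVolAux

mutual
theorem eval_nonneg : ∀ (t : LpTree) (x : ℕ → ℝ), 0 ≤ t.eval x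
  | .leaf, x => abs_nonneg _
  | .node p cs, x => Real.rpow_nonneg (evalSum_nonneg p cs x) _

theorem evalSum_nonneg : ∀ (p : ℝ) (cs : List LpTree) (x : ℕ → ℝ), 0 ≤ evalSum p cs x
  | _, [], _ => le_refl 0
  | p, c :: cs, x =>
      add_nonneg (Real.rpow_nonneg (eval_nonneg c x) p) (evalSum_nonneg p cs _)
end

mutual
theorem eval_congr : ∀ (t : LpTree) (x y : ℕ → ℝ),
    (∀ i, i < t.numLeaves → x i = y i) → t.eval x = t.eval y
  | .leaf, x, y, h => by rw [eval, eval, h 0 (by rw [numLeaves]; omega)]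
  | .node p cs, x, y, h => by
      rw [eval, eval, evalSum_congr p cs x y (by rw [numLeaves] at h; exact h)]

theorem evalSum_congr : ∀ (p : ℝ) (cs : List LpTree) (x y : ℕ → ℝ),
    (∀ i, i < numLeavesList cs → x i = y i) → evalSum p cs x = evalSum p cs y
  | _, [], _, _, _ => rfl
  | p, c :: cs, x, y, h => by
      rw [evalSum, evalSum,
        eval_congr c x y (fun i hi => h i (by rw [numLeavesList]; omega)),
        evalSum_congr p cs _ _ (fun i hi => h (i + c.numLeaves) (by rw [numLeavesList]; omega))]
end

mutual
theorem eval_measurable : ∀ t : LpTree, Measurable t.eval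
  | .leaf => by
      have h : eval .leaf = fun x : ℕ → ℝ => |x 0| := by funext x; rw [eval]
      rw [h]; exact (measurable_pi_apply 0).abs
  | .node p cs => by
      have h : eval (.node p cs) = fun x => (evalSum p cs x) ^ (1/p) := by funext x; rw [eval]
      rw [h]; exact (measurable_rpow_const (1/p)).comp (evalSum_measurable p cs)

theorem evalSum_measurable : ∀ (p : ℝ) (cs : List LpTree), Measurable (evalSum p cs)
  | p, [] => by
      have h : evalSum p [] = fun _ : ℕ → ℝ => (0:ℝ) := by funext x; rw [evalSum]
      rw [h]; exact measurable_const
  | p, c :: cs => by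
      have h : evalSum p (c :: cs) = fun x : ℕ → ℝ =>
          (eval c x) ^ p + evalSum p cs (fun i => x (i + c.numLeaves)) := by
        funext x; rw [evalSum]
      rw [h]
      exact (((measurable_rpow_const p).comp (eval_measurable c)).add
        ((evalSum_measurable p cs).comp
          (measurable_pi_lambda _ fun i => measurable_pi_apply _)))
end

mutual
theorem eval_smul : ∀ (t : LpTree), t.WF → ∀ (c : ℝ), 0 ≤ c → ∀ x,
    t.eval (fun i => c * x i) = c * t.eval x
  | .leaf, _, c, hc, x => by
      rw [eval, eval, abs_mul, abs_of_nonneg hc]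
  | .node p cs, ht, c, hc, x => by
      have hp : 0 < p := by cases ht with | node p cs hp hcs h => exact hp
      have hwf : ∀ c' ∈ cs, WF c' := by cases ht with | node p cs hp hcs h => exact h
      rw [eval, eval, evalSum_smul p cs hwf hp c hc x,
        Real.mul_rpow (Real.rpow_nonneg hc p) (evalSum_nonneg p cs x),
        ← Real.rpow_mul hc, mul_one_div_cancel hp.ne', Real.rpow_one]

theorem evalSum_smul : ∀ (p : ℝ) (cs : List LpTree), (∀ c' ∈ cs, WF c') → 0 < p →
    ∀ (c : ℝ), 0 ≤ c → ∀ x,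
    evalSum p cs (fun i => c * x i) = c ^ p * evalSum p cs x
  | p, [], _, hp, c, hc, x => by rw [evalSum, evalSum, mul_zero]
  | p, c0 :: cs, h, hp, c, hc, x => by
      rw [evalSum, evalSum, eval_smul c0 (h c0 (by simp)) c hc x,
        Real.mul_rpow hc (eval_nonneg c0 x), mul_add,
        evalSum_smul p cs (fun c' hc' => h c' (by simp [hc'])) hp c hc]
end

theorem numLeaves_pos : ∀ (t : LpTree), t.WF → 0 < t.numLeaves
  | .leaf, _ => by rw [numLeaves]; omega
  | .node p cs, ht => by
      cases ht with
      | node p cs hp hcs h =>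
        cases cs with
        | nil => exact absurd rfl hcs
        | cons c cs' =>
          have := numLeaves_pos c (h c (by simp))
          rw [numLeaves, numLeavesList]
          omega

mutual
theorem gammaFactor_pos : ∀ (t : LpTree), t.WF → 0 < gammaFactor t
  | .leaf, _ => by rw [gammaFactor]; exact one_pos
  | .node p cs, ht => by
      cases ht with
      | node p cs hp hcs h =>
        have hn : 0 < numLeavesList cs := numLeaves_pos (.node p cs) (WF.node p cs hp hcs h)
        have hΓ : 0 < Real.Gamma (numLeavesList cs / p) :=
          Real.Gamma_pos_of_pos (by positivity)
        have h1 := gammaNumerator_pos p cs hp h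
        have h2 := gammaFactorList_pos cs h
        rw [gammaFactor]
        positivity

theorem gammaNumerator_pos : ∀ (p : ℝ) (cs : List LpTree), 0 < p → (∀ c ∈ cs, WF c) →
    0 < gammaNumerator p cs
  | p, [], _, _ => by rw [gammaNumerator]; exact one_pos
  | p, c :: cs, hp, h => by
      have hm : (0:ℝ) < c.numLeaves := by
        exact_mod_cast numLeaves_pos c (h c (by simp))
      have hΓ : 0 < Real.Gamma (c.numLeaves / p) := Real.Gamma_pos_of_pos (by positivity)
      have h2 := gammaNumerator_pos p cs hp (fun c' hc' => h c' (by simp [hc']))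
      rw [gammaNumerator]
      positivity

theorem gammaFactorList_pos : ∀ (cs : List LpTree), (∀ c ∈ cs, WF c) →
    0 < gammaFactorList cs
  | [], _ => by rw [gammaFactorList]; exact one_pos
  | c :: cs, h => by
      have h1 := gammaFactor_pos c (h c (by simp))
      have h2 := gammaFactorList_pos cs (fun c' hc' => h c' (by simp [hc']))
      rw [gammaFactorList]
      positivity
end

lemma ext_measurable (n : ℕ) :
    Measurable fun (x : Fin n → ℝ) (i : ℕ) => if h : i < n then x ⟨i, h⟩ else 0 :=
  measurable_pi_lambda _ fun i => by
    by_cases h : i < n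
    · simpa only [dif_pos h] using measurable_pi_apply (⟨i, h⟩ : Fin n)
    · simpa only [dif_neg h] using measurable_const

theorem evalFin_measurable (t : LpTree) : Measurable t.evalFin :=
  (eval_measurable t).comp (ext_measurable t.numLeaves)

theorem evalFin_nonneg (t : LpTree) (x : Fin t.numLeaves → ℝ) : 0 ≤ t.evalFin x :=
  eval_nonneg t _

theorem evalFin_smul (t : LpTree) (ht : t.WF) (c : ℝ) (hc : 0 ≤ c)
    (x : Fin t.numLeaves → ℝ) : t.evalFin (c • x) = c * t.evalFin x := by
  rw [evalFin, evalFin]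
  have hfun : (fun i => if h : i < t.numLeaves then (c • x) ⟨i, h⟩ else 0)
      = fun i => c * (if h : i < t.numLeaves then x ⟨i, h⟩ else 0) := by
    funext i
    by_cases h : i < t.numLeaves
    · simp [h]
    · simp [h]
  rw [hfun, eval_smul t ht c hc]

mutual
theorem keyV : ∀ (t : LpTree), t.WF →
    volume {x : Fin t.numLeaves → ℝ | t.evalFin x ≤ 1} =
      ENNReal.ofReal (2 ^ t.numLeaves / t.numLeaves * t.gammaFactor)
  | .leaf, _ => by
      show volume {x : Fin 1 → ℝ | evalFin .leaf x ≤ 1}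
          = ENNReal.ofReal (2 ^ (1:ℕ) / ((1:ℕ):ℝ) * gammaFactor .leaf)
      have hset : {x : Fin 1 → ℝ | evalFin .leaf x ≤ 1}
          = ⇑(MeasurableEquiv.funUnique (Fin 1) ℝ) ⁻¹' Set.Icc (-1 : ℝ) 1 := by
        ext x
        show evalFin .leaf x ≤ 1 ↔ _
        have habs : evalFin .leaf x = |x 0| := by
          unfold evalFin
          rw [eval, dif_pos (show (0:ℕ) < numLeaves .leaf from Nat.one_pos)]
          rfl
        rw [habs]
        show |x 0| ≤ 1 ↔ x 0 ∈ Set.Icc (-1:ℝ) 1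
        rw [Set.mem_Icc, ← abs_le]
      rw [hset]
      erw [(volume_preserving_funUnique (Fin 1) ℝ).measure_preimage
          measurableSet_Icc.nullMeasurableSet]
      rw [Real.volume_Icc, gammaFactor]
      norm_num
  | .node p cs, ht => by
      have hp : 0 < p := by cases ht with | node p cs hp hcs h => exact hp
      have hcs : cs ≠ [] := by cases ht with | node p cs hp hcs h => exact hcs
      have h : ∀ c ∈ cs, WF c := by cases ht with | node p cs hp hcs h => exact h
      have hn : 0 < numLeaves (.node p cs) := numLeaves_pos _ ht
      have hnr : (0:ℝ) < (numLeavesList cs : ℝ) := by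
        have hh : numLeaves (.node p cs) = numLeavesList cs := by rw [numLeaves]
        exact_mod_cast hh ▸ hn
      have hcore := LpVolAux.core hn (evalFin_measurable (.node p cs))
        (evalFin_nonneg (.node p cs)) (evalFin_smul (.node p cs) ht) hp
      have hrw : ∀ x : Fin (numLeaves (.node p cs)) → ℝ,
          ENNReal.ofReal (Real.exp (-(evalFin (.node p cs) x) ^ p))
            = ENNReal.ofReal (Real.exp (- evalSum p cs
                (fun i => if h : i < numLeavesList cs then x ⟨i, h⟩ else 0))) := by
        intro x
        have hpow : (evalFin (.node p cs) x) ^ p = evalSum p cs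
            (fun i => if h : i < numLeavesList cs then x ⟨i, h⟩ else 0) := by
          rw [evalFin, eval, ← Real.rpow_mul (evalSum_nonneg p cs _),
            one_div_mul_cancel hp.ne', Real.rpow_one]
          rfl
        rw [hpow]
      have hkl : (∫⁻ x : Fin (numLeaves (.node p cs)) → ℝ,
          ENNReal.ofReal (Real.exp (-(evalFin (.node p cs) x) ^ p)))
          = ENNReal.ofReal (2 ^ numLeavesList cs * gammaNumerator p cs * gammaFactorList cs
            / p ^ cs.length) := (lintegral_congr hrw).trans (keyL p cs hp h)
      rw [hcore] at hkl
      have hΓpos : 0 < Real.Gamma ((numLeaves (.node p cs) : ℝ) / p + 1) :=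
        Real.Gamma_pos_of_pos (by positivity)
      refine LpVolAux.ennreal_cancel (g := ENNReal.ofReal
          (Real.Gamma ((numLeaves (.node p cs) : ℝ) / p + 1)))
        (ENNReal.ofReal_pos.mpr hΓpos).ne' ENNReal.ofReal_ne_top ?_
      rw [hkl, ← ENNReal.ofReal_mul (by
        have h1 := gammaFactor_pos (.node p cs) ht
        positivity)]
      congr 1
      have hΓ0 : Real.Gamma ((numLeavesList cs : ℝ) / p) ≠ 0 :=
        (Real.Gamma_pos_of_pos (by positivity)).ne'
      have hGadd : Real.Gamma ((numLeavesList cs : ℝ) / p + 1)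
          = ((numLeavesList cs : ℝ) / p) * Real.Gamma ((numLeavesList cs : ℝ) / p) :=
        Real.Gamma_add_one (by positivity)
      have hlen : cs.length - 1 + 1 = cs.length :=
        Nat.succ_pred_eq_of_pos (List.length_pos_iff.mpr hcs)
      have hpow : p ^ cs.length = p ^ (cs.length - 1) * p := by
        rw [← pow_succ, hlen]
      show (2:ℝ) ^ numLeavesList cs * gammaNumerator p cs * gammaFactorList cs / p ^ cs.length
        = 2 ^ numLeavesList cs / (numLeavesList cs : ℝ) * gammaFactor (.node p cs)
          * Real.Gamma ((numLeavesList cs : ℝ) / p + 1)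
      rw [gammaFactor, hGadd, hpow]
      field_simp

theorem keyL : ∀ (p : ℝ) (cs : List LpTree), 0 < p → (∀ c ∈ cs, c.WF) →
    (∫⁻ x : Fin (numLeavesList cs) → ℝ, ENNReal.ofReal (Real.exp
      (- evalSum p cs (fun i => if h : i < numLeavesList cs then x ⟨i, h⟩ else 0)))) =
    ENNReal.ofReal (2 ^ numLeavesList cs * gammaNumerator p cs * gammaFactorList cs
      / p ^ cs.length)
  | p, [], hp, _ => by
      have hzero : ∀ x : Fin (numLeavesList ([] : List LpTree)) → ℝ,
          evalSum p [] (fun i => if h : i < numLeavesList ([] : List LpTree)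
            then x ⟨i, h⟩ else 0) = 0 := fun _ => by rw [evalSum]
      simp only [hzero, neg_zero, Real.exp_zero, ENNReal.ofReal_one, lintegral_const, one_mul]
      have huniv : (volume : Measure (Fin (numLeavesList ([] : List LpTree)) → ℝ))
          Set.univ = 1 := by
        rw [MeasureTheory.volume_pi, MeasureTheory.Measure.pi_univ]
        simp [numLeavesList]
        exact pow_zero _
      rw [huniv, gammaNumerator, gammaFactorList]
      norm_num [numLeavesList]
  | p, c :: cs, hp, h => by
      have hwfc : c.WF := h c (by simp)
      have hwfcs : ∀ c' ∈ cs, WF c' := fun c' hc' => h c' (by simp [hc'])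
      have hm : 0 < c.numLeaves := numLeaves_pos c hwfc
      have hmr : (0:ℝ) < (c.numLeaves : ℝ) := by exact_mod_cast hm
      have hA : c.numLeaves + numLeavesList cs = numLeavesList (c :: cs) := by
        rw [numLeavesList]
      have hFmes : AEMeasurable (fun y : Fin c.numLeaves → ℝ =>
          ENNReal.ofReal (Real.exp (-(evalFin c y) ^ p)))
          (volume : Measure (Fin c.numLeaves → ℝ)) :=
        ((Real.measurable_exp.comp
          (((measurable_rpow_const p).comp
            (evalFin_measurable c)).neg)).ennreal_ofReal).aemeasurable
      have hGmes : AEMeasurable (fun z : Fin (numLeavesList cs) → ℝ =>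
          ENNReal.ofReal (Real.exp (- evalSum p cs
            (fun i => if h : i < numLeavesList cs then z ⟨i, h⟩ else 0))))
          (volume : Measure (Fin (numLeavesList cs) → ℝ)) :=
        ((Real.measurable_exp.comp
          (((evalSum_measurable p cs).comp
            (ext_measurable (numLeavesList cs))).neg)).ennreal_ofReal).aemeasurable
      have hH : ∀ (y : Fin c.numLeaves → ℝ) (z : Fin (numLeavesList cs) → ℝ),
          (fun x : Fin (numLeavesList (c :: cs)) → ℝ =>
            ENNReal.ofReal (Real.exp (- evalSum p (c :: cs)
              (fun i => if hi : i < numLeavesList (c :: cs) then x ⟨i, hi⟩ else 0))))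
            (LpVolAux.combine hA y z)
          = (fun y : Fin c.numLeaves → ℝ =>
              ENNReal.ofReal (Real.exp (-(evalFin c y) ^ p))) y
              * (fun z : Fin (numLeavesList cs) → ℝ =>
                  ENNReal.ofReal (Real.exp (- evalSum p cs
                    (fun i => if h : i < numLeavesList cs then z ⟨i, h⟩ else 0)))) z := by
        intro y z
        simp only []
        have h1 : eval c (fun i => if hi : i < numLeavesList (c :: cs)
              then LpVolAux.combine hA y z ⟨i, hi⟩ else 0) = evalFin c y := by
          rw [evalFin]
          apply eval_congr
          intro i hi
          have hiA : i < numLeavesList (c :: cs) := by rw [numLeavesList]; omega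
          rw [dif_pos hiA, dif_pos hi, LpVolAux.combine]
          simp [hi]
        have h2 : evalSum p cs (fun i =>
              (fun i => if hi : i < numLeavesList (c :: cs)
                then LpVolAux.combine hA y z ⟨i, hi⟩ else 0) (i + c.numLeaves))
            = evalSum p cs (fun i => if h : i < numLeavesList cs then z ⟨i, h⟩ else 0) := by
          apply evalSum_congr
          intro i hi
          have hiA : i + c.numLeaves < numLeavesList (c :: cs) := by
            rw [numLeavesList]; omega
          have hnot : ¬ (i + c.numLeaves < c.numLeaves) := by omega
          simp only [dif_pos hiA, dif_pos hi, LpVolAux.combine]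
          rw [dif_neg hnot]
          congr 1
          apply Fin.ext
          simp
        have hsum : evalSum p (c :: cs) (fun i => if hi : i < numLeavesList (c :: cs)
              then LpVolAux.combine hA y z ⟨i, hi⟩ else 0)
            = (evalFin c y) ^ p + evalSum p cs
                (fun i => if h : i < numLeavesList cs then z ⟨i, h⟩ else 0) := by
          rw [evalSum, h1, h2]
        rw [hsum, neg_add, Real.exp_add, ENNReal.ofReal_mul (Real.exp_nonneg _)]
      rw [LpVolAux.lintegral_split hA _ _ hFmes hGmes _ hH, keyL p cs hp hwfcs]
      have hcore := LpVolAux.core hm (evalFin_measurable c)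
        (evalFin_nonneg c) (evalFin_smul c hwfc) hp
      rw [hcore, keyV c hwfc]
      have hγc := gammaFactor_pos c hwfc
      have hΓm : 0 < Real.Gamma ((c.numLeaves : ℝ) / p + 1) :=
        Real.Gamma_pos_of_pos (by positivity)
      rw [← ENNReal.ofReal_mul (by positivity), ← ENNReal.ofReal_mul (by positivity)]
      congr 1
      have hΓ0 : Real.Gamma ((c.numLeaves : ℝ) / p) ≠ 0 :=
        (Real.Gamma_pos_of_pos (by positivity)).ne'
      have hGadd : Real.Gamma ((c.numLeaves : ℝ) / p + 1)
          = ((c.numLeaves : ℝ) / p) * Real.Gamma ((c.numLeaves : ℝ) / p) :=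
        Real.Gamma_add_one (by positivity)
      show (2:ℝ) ^ c.numLeaves / (c.numLeaves : ℝ) * gammaFactor c
          * Real.Gamma ((c.numLeaves : ℝ) / p + 1)
          * (2 ^ numLeavesList cs * gammaNumerator p cs * gammaFactorList cs / p ^ cs.length)
        = 2 ^ numLeavesList (c :: cs) * gammaNumerator p (c :: cs)
            * gammaFactorList (c :: cs) / p ^ (c :: cs).length
      rw [gammaNumerator, gammaFactorList, hGadd,
        show numLeavesList (c :: cs) = c.numLeaves + numLeavesList cs from by rw [numLeavesList],
        pow_add, List.length_cons, pow_succ]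
      field_simp
end

end LpTree

/-- Volume of the `L_p`-nested ball of radius `R`:
`V = (R^n 2^n / n) · ∏_{I} (∏_k Γ(n_{I,k}/p_I)) / (p_I^{ℓ_I−1} Γ(n_I/p_I))`. -/
theorem LpTree.volume_ball (t : LpTree) (ht : t.WF) (R : ℝ) (hR : 0 < R) :
    volume {x : Fin t.numLeaves → ℝ | t.evalFin x ≤ R} =
      ENNReal.ofReal
        (R ^ t.numLeaves * 2 ^ t.numLeaves / t.numLeaves * t.gammaFactor) := by
  have hn : 0 < t.numLeaves := LpTree.numLeaves_pos t ht
  rw [LpVolAux.volume_scale (LpTree.evalFin_smul t ht) hR, LpTree.keyV t ht,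
    ← ENNReal.ofReal_mul (by positivity)]
  congr 1
  field_simp
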